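/- Let X be a linear order, m ≥ 1 an integer, and let a, b, c, d, e : Fin m → X be pairwise distinct functions. Then it is impossible that the equalities φ(a,b) = φ(c,d), φ(b,c) = φ(c,e), φ(a,d) = φ(d,e), φ(b,d) = φ(b,e), φ(a,c) = φ(a,e) all hold with the five common values pairwise distinct. (This is the impossibility, under the coloring (η₂, Δ), of a colored K₅ of color type (2,2,2,2,2) containing exactly four monochromatic copies of K_{1,2}.) -/
import Mathlib



noncomputable def eta {X : Type*} {m : ℕ} (v w : Fin m → X) : Option (Fin m × Sym2 X) := by
  classical
  exact if h : v ≠ w then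
    some (
      let i := (Finset.univ.filter fun i => v i ≠ w i).min' (by
        obtain ⟨i, hi⟩ := Function.ne_iff.mp h
        exact ⟨i, Finset.mem_filter.mpr ⟨Finset.mem_univ _, hi⟩⟩)
      (i, s(v i, w i)))
  else none

/-- Lexicographic order on functions `Fin m → X`: `v ≺ w` iff at the least index where
they differ, `v` is smaller. -/
def lexLt {X : Type*} [LinearOrder X] {m : ℕ} (v w : Fin m → X) : Prop :=
  ∃ i : Fin m, (∀ j : Fin m, j < i → v j = w j) ∧ v i < w i

/-- `Δ(v,w) : Fin m → {−1,0,+1}` compares `v` and `w` coordinatewise. -/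
def delta {X : Type*} [LinearOrder X] {m : ℕ} (v w : Fin m → X) : Fin m → ℤ :=
  fun i => if v i < w i then 1 else if v i = w i then 0 else -1

/-- The symmetric coloring `φ(v,w) := (η(v,w), Δ(min(v,w), max(v,w)))`, where min and max
are with respect to the lexicographic order. -/
noncomputable def phi {X : Type*} [LinearOrder X] {m : ℕ} (v w : Fin m → X) :
    Option (Fin m × Sym2 X) × (Fin m → ℤ) := by
  classical
  exact (eta v w, if lexLt v w then delta v w else delta w v)

section Aux

variable {X : Type*} [LinearOrder X] {m : ℕ}

def diffSet (v w : Fin m → X) : Finset (Fin m) :=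
  Finset.univ.filter fun i => v i ≠ w i

lemma diffSet_nonempty {v w : Fin m → X} (h : v ≠ w) : (diffSet v w).Nonempty := by
  obtain ⟨i, hi⟩ := Function.ne_iff.mp h
  exact ⟨i, Finset.mem_filter.mpr ⟨Finset.mem_univ _, hi⟩⟩

noncomputable def fd (v w : Fin m → X) (h : v ≠ w) : Fin m :=
  (diffSet v w).min' (diffSet_nonempty h)

lemma fd_ne {v w : Fin m → X} (h : v ≠ w) : v (fd v w h) ≠ w (fd v w h) :=
  (Finset.mem_filter.mp ((diffSet v w).min'_mem (diffSet_nonempty h))).2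

lemma fd_min {v w : Fin m → X} (h : v ≠ w) {j : Fin m} (hj : v j ≠ w j) :
    fd v w h ≤ j :=
  Finset.min'_le (diffSet v w) j (Finset.mem_filter.mpr ⟨Finset.mem_univ _, hj⟩)

lemma fd_lt {v w : Fin m → X} (h : v ≠ w) {j : Fin m} (hj : j < fd v w h) :
    v j = w j := by
  by_contra hne
  exact absurd (fd_min h hne) (not_le.mpr hj)

lemma fd_unique {v w : Fin m → X} (h : v ≠ w) {j : Fin m} (hj : v j ≠ w j)
    (hmin : ∀ k, k < j → v k = w k) : fd v w h = j :=
  le_antisymm (fd_min h hj) (le_of_not_gt fun hlt => fd_ne h (hmin _ hlt))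

lemma eta_eq {v w : Fin m → X} (h : v ≠ w) :
    eta v w = some (fd v w h, s(v (fd v w h), w (fd v w h))) := by
  simp only [eta]
  rw [dif_pos h]
  simp only [fd, diffSet, Finset.filter_congr_decidable]
  congr!

lemma lexLt_iff {v w : Fin m → X} (h : v ≠ w) :
    lexLt v w ↔ v (fd v w h) < w (fd v w h) := by
  constructor
  · rintro ⟨i, hpre, hlt⟩
    have : fd v w h = i := fd_unique h hlt.ne hpre
    rw [this]; exact hlt
  · intro hlt
    exact ⟨fd v w h, fun j hj => fd_lt h hj, hlt⟩

lemma fd_comm {v w : Fin m → X} (h : v ≠ w) :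
    fd w v h.symm = fd v w h :=
  fd_unique h.symm (fd_ne h).symm (fun k hk => (fd_lt h hk).symm)

lemma phi_fst (v w : Fin m → X) : (phi v w).1 = eta v w := by
  simp only [phi]

lemma phi_snd_pos {v w : Fin m → X} (h : lexLt v w) : (phi v w).2 = delta v w := by
  simp only [phi]
  rw [if_pos h]

lemma phi_snd_neg {v w : Fin m → X} (h : ¬ lexLt v w) : (phi v w).2 = delta w v := by
  simp only [phi]
  rw [if_neg h]

lemma phi_comm {v w : Fin m → X} (h : v ≠ w) : phi v w = phi w v := by
  have heta : (phi v w).1 = (phi w v).1 := by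
    rw [phi_fst, phi_fst, eta_eq h, eta_eq h.symm, fd_comm h, Sym2.eq_swap]
  have hfd := fd_ne h
  have hsnd : (phi v w).2 = (phi w v).2 := by
    rcases hfd.lt_or_gt with hlt | hlt
    · have h1 : lexLt v w := (lexLt_iff h).mpr hlt
      have h2 : ¬ lexLt w v := by
        rw [lexLt_iff h.symm, fd_comm h]
        exact not_lt.mpr hlt.le
      rw [phi_snd_pos h1, phi_snd_neg h2]
    · have h1 : ¬ lexLt v w := by rw [lexLt_iff h]; exact not_lt.mpr hlt.le
      have h2 : lexLt w v := by rw [lexLt_iff h.symm, fd_comm h]; exact hlt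
      rw [phi_snd_neg h1, phi_snd_pos h2]
  exact Prod.ext heta hsnd

lemma delta_zero {v w : Fin m → X} {j : Fin m} : delta v w j = 0 ↔ v j = w j := by
  simp only [delta]
  split_ifs with h1 h2
  · simp [h1.ne]
  · simp [h2]
  · simp [h2]

/-- Cherry lemma: from `φ(u,v) = φ(u,w)` with shared vertex `u`. -/
lemma cherry {u v w : Fin m → X} (huv : u ≠ v) (huw : u ≠ w)
    (h : phi u v = phi u w) :
    fd u v huv = fd u w huw ∧ v (fd u v huv) = w (fd u v huv) ∧
      ∀ j, (v j = u j ↔ w j = u j) := by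
  have hfst : eta u v = eta u w := congrArg Prod.fst h
  rw [eta_eq huv, eta_eq huw, Option.some_inj, Prod.mk.injEq] at hfst
  obtain ⟨hI, hsym⟩ := hfst
  rw [← hI] at hsym
  have hvw : v (fd u v huv) = w (fd u v huv) := by
    rcases Sym2.eq_iff.mp hsym with ⟨-, h2⟩ | ⟨-, h2⟩
    · exact h2
    · exact absurd h2.symm (fd_ne huv)
  refine ⟨hI, hvw, ?_⟩
  have hlex : lexLt u v ↔ lexLt u w := by
    rw [lexLt_iff huv, lexLt_iff huw, ← hI, ← hvw]
  have hsnd : (phi u v).2 = (phi u w).2 := congrArg Prod.snd h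
  intro j
  by_cases hl : lexLt u v
  · rw [phi_snd_pos hl, phi_snd_pos (hlex.mp hl)] at hsnd
    have hj : delta u v j = delta u w j := congrFun hsnd j
    constructor
    · intro h'
      exact (delta_zero.mp (hj ▸ delta_zero.mpr h'.symm)).symm
    · intro h'
      exact (delta_zero.mp (hj.symm ▸ delta_zero.mpr h'.symm)).symm
  · rw [phi_snd_neg hl, phi_snd_neg (fun h' => hl (hlex.mpr h'))] at hsnd
    have hj : delta v u j = delta w u j := congrFun hsnd j
    constructor
    · intro h'
      exact delta_zero.mp (hj ▸ delta_zero.mpr h')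
    · intro h'
      exact delta_zero.mp (hj.symm ▸ delta_zero.mpr h')

end Aux

/-- Under the coloring `φ = (η, Δ)` there is no colored `K₅` of color type `(2,2,2,2,2)`
containing exactly four monochromatic copies of `K_{1,2}`: the pattern
`φ(a,b)=φ(c,d)`, `φ(b,c)=φ(c,e)`, `φ(a,d)=φ(d,e)`, `φ(b,d)=φ(b,e)`, `φ(a,c)=φ(a,e)`
with the five common values pairwise distinct is impossible. -/
theorem no_K5_four_mono_cherries {X : Type*} [LinearOrder X] {m : ℕ} (hm : 1 ≤ m)
    (a b c d e : Fin m → X)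
    (hab : a ≠ b) (hac : a ≠ c) (had : a ≠ d) (hae : a ≠ e)
    (hbc : b ≠ c) (hbd : b ≠ d) (hbe : b ≠ e)
    (hcd : c ≠ d) (hce : c ≠ e) (hde : d ≠ e) :
    ¬ (phi a b = phi c d ∧ phi b c = phi c e ∧ phi a d = phi d e ∧
       phi b d = phi b e ∧ phi a c = phi a e ∧
       phi a b ≠ phi b c ∧ phi a b ≠ phi a d ∧ phi a b ≠ phi b d ∧ phi a b ≠ phi a c ∧
       phi b c ≠ phi a d ∧ phi b c ≠ phi b d ∧ phi b c ≠ phi a c ∧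
       phi a d ≠ phi b d ∧ phi a d ≠ phi a c ∧
       phi b d ≠ phi a c) := by
  rintro ⟨H1, H2, H3, H4, H5, -, -, -, -, -, -, -, -, -, -⟩
  -- cherries (shared vertices c, d, b, a respectively; `e` is the common leaf)
  obtain ⟨hI1, hbe1, hC⟩ := cherry hbc.symm hce ((phi_comm hbc).symm.trans H2)
  obtain ⟨hI2, hae2, hD⟩ := cherry had.symm hde ((phi_comm had).symm.trans H3)
  obtain ⟨-, -, hB⟩ := cherry hbd hbe H4
  obtain ⟨-, -, hA⟩ := cherry hac hae H5
  -- the matching: fd a b = fd c d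
  have hfst : eta a b = eta c d := congrArg Prod.fst H1
  rw [eta_eq hab, eta_eq hcd, Option.some_inj, Prod.mk.injEq] at hfst
  have hI0 : fd a b hab = fd c d hcd := hfst.1
  set I0 := fd a b hab with hI0def
  set i1 := fd c e hce with hi1def
  set i2 := fd d e hde with hi2def
  rw [hI1] at hbe1
  rw [hI2] at hae2
  -- at i1 : b i1 = e i1, c i1 ≠ e i1; derive d i1 = b i1, a i1 = d i1
  have hce1 : c i1 ≠ e i1 := fd_ne hce
  have hdb1 : d i1 = b i1 := (hB i1).mpr hbe1.symm
  have hed1 : e i1 = d i1 := hbe1.symm.trans hdb1.symm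
  have had1 : a i1 = d i1 := (hD i1).mpr hed1
  have hab1 : a i1 = b i1 := had1.trans hdb1
  have hne10 : i1 ≠ I0 := by
    intro h
    exact fd_ne hab (by rw [← hI0def, ← h]; exact hab1)
  have hcd1 : c i1 ≠ d i1 := fun h => hce1 (h.trans (hdb1.trans hbe1))
  have hI0lt1 : I0 < i1 := by
    have := fd_min hcd hcd1
    rw [← hI0] at this
    exact lt_of_le_of_ne this hne10.symm
  have hcE : c I0 = e I0 := fd_lt hce hI0lt1
  -- at i2 : a i2 = e i2, d i2 ≠ e i2; derive c i2 = a i2, b i2 = c i2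
  have hde2 : d i2 ≠ e i2 := fd_ne hde
  have hca2 : c i2 = a i2 := (hA i2).mpr hae2.symm
  have hec2 : e i2 = c i2 := hae2.symm.trans hca2.symm
  have hbc2 : b i2 = c i2 := (hC i2).mpr hec2
  have hab2 : a i2 = b i2 := hca2.symm.trans hbc2.symm
  have hne20 : i2 ≠ I0 := by
    intro h
    exact fd_ne hab (by rw [← hI0def, ← h]; exact hab2)
  have hcd2 : c i2 ≠ d i2 := fun h => hde2 (h.symm.trans hec2.symm)
  have hI0lt2 : I0 < i2 := by
    have := fd_min hcd hcd2
    rw [← hI0] at this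
    exact lt_of_le_of_ne this hne20.symm
  have hdE : d I0 = e I0 := fd_lt hde hI0lt2
  have : c I0 ≠ d I0 := by
    have := fd_ne hcd
    rwa [← hI0] at this
  exact this (hcE.trans hdE.symm)
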